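/- Let u_1,…,u_n ∈ ℝ^d with n ≥ 2, and let b, c, R > 0. If for all t ∈ ℝ^d with ‖t‖ > R one has (1/(π² n(n−1))) Σ_{i≠j} ξ(u_i,u_j;t) ‖t‖^b ≥ c, then the empirical measure n^{−1}Σ_{i=1}^n δ_{u_i} satisfies the weak Cramér condition with parameter (b,c,R), i.e., for all t ∈ ℝ^d with ‖t‖ > R, |(1/n)Σ_{i=1}^n e^{i t'u_i}| ≤ 1 − c/‖t‖^b. -/

import Mathlib

/-! Two unit vectors satisfy `|e^{iα} + e^{iβ}| = 2 |cos ((α - β) / 2)|`. Reducing `α - β` modulo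
`2π` into `[-π, π]` and using `cos z ≤ 1 - 4 z² / π²` on `[-π/2, π/2]` (concavity of `sin`) gives
`|e^{iα} + e^{iβ}| ≤ 2 - (2/π²) inf_q (α - β - 2πq)²`. Each `e^{iθᵢ}` occurs `2(n - 1)` times in
`∑_{i ≠ j} (e^{iθᵢ} + e^{iθⱼ})`, so the triangle inequality over ordered pairs gives
`2(n - 1) |∑ᵢ e^{iθᵢ}| ≤ 2n(n - 1) - (2/π²) ∑_{i ≠ j} ξ(uᵢ, uⱼ; t)`. -/

open MeasureTheory ProbabilityTheory Real
open scoped BigOperators ENNReal NNReal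

noncomputable section

/-- Euclidean space ℝ^d. -/
abbrev Ed (d : ℕ) := EuclideanSpace ℝ (Fin d)

variable {d : ℕ}

/-- The characteristic function of a (Borel) measure on ℝ^d. -/
def charFn (μ : Measure (Ed d)) (t : Ed d) : ℂ :=
  ∫ x, Complex.exp (((inner ℝ t x : ℝ) : ℂ) * Complex.I) ∂μ

/-- Partial derivative in the k-th coordinate direction. -/
def partialD {F : Type*} [NormedAddCommGroup F] [NormedSpace ℝ F]
    (k : Fin d) (f : Ed d → F) : Ed d → F :=
  fun x => fderiv ℝ f x (EuclideanSpace.single k 1)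

/-- Iterated partial derivative `D^ν` for a multi-index ν. -/
def mDeriv {F : Type*} [NormedAddCommGroup F] [NormedSpace ℝ F]
    (ν : Fin d → ℕ) (f : Ed d → F) : Ed d → F :=
  (List.finRange d).foldr (fun k g => (partialD k)^[ν k] g) f

/-- The ν-th cumulant of a measure μ on ℝ^d:
`κ_ν = (−i)^{|ν|} D^ν (log φ_μ)(0)` where φ_μ is the characteristic function. -/
def cumulant (μ : Measure (Ed d)) (ν : Fin d → ℕ) : ℂ :=
  (-Complex.I) ^ (∑ k, ν k) * mDeriv ν (fun t => Complex.log (charFn μ t)) 0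

/-- The finite set of multi-indices ν ∈ ℤ₊^d with |ν| = j. -/
def multiIdx (d j : ℕ) : Finset (Fin d → ℕ) :=
  (Fintype.piFinset fun _ : Fin d => Finset.range (j + 1)).filter fun ν => ∑ k, ν k = j

/-- The differential operator `χ̄_j(−D)` applied to f, where
`χ̄_j(z) = j! Σ_{|ν|=j} (χ_ν/ν!) z^ν`. -/
def chiOpApply (χ : (Fin d → ℕ) → ℂ) (j : ℕ) (f : Ed d → ℂ) : Ed d → ℂ :=
  fun x => (j.factorial : ℂ) * (-1 : ℂ) ^ j *
    ∑ ν ∈ multiIdx d j, (χ ν / ∏ k, ((ν k).factorial : ℂ)) * mDeriv ν f x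

/-- The Edgeworth polynomial operator `P̃_j(−D; {χ_ν})` applied to f:
`P̃_j = Σ_{m=1}^{j} (1/m!) Σ*_{j_1+⋯+j_m=j} ∏_k χ̄_{j_k+2}(−D)/(j_k+2)!`,
encoded as a sum over compositions of j. -/
def edgeworthOp (χ : (Fin d → ℕ) → ℂ) (j : ℕ) (f : Ed d → ℂ) : Ed d → ℂ :=
  fun x => ∑ c : Composition j, ((c.length.factorial : ℂ))⁻¹ *
    (c.blocks.foldr
      (fun jk g => fun y => (((jk + 2).factorial : ℂ))⁻¹ * chiOpApply χ (jk + 2) g y) f) x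

/-- The standard normal density on ℝ^d. -/
def gaussDensity (d : ℕ) (x : Ed d) : ℝ :=
  (2 * π) ^ (-(d : ℝ) / 2) * Real.exp (-‖x‖ ^ 2 / 2)

/-- The density of the order-s Edgeworth signed measure
`Σ_{j=0}^{s−2} n^{−j/2} P̃_j(−D;{χ_ν}) φ(x)`. -/
def edgeworthDensity (χ : (Fin d → ℕ) → ℂ) (n s : ℕ) (x : Ed d) : ℝ :=
  (∑ j ∈ Finset.range (s - 1), (((n : ℝ) ^ (-(j : ℝ) / 2) : ℝ) : ℂ) *
    edgeworthOp χ j (fun y => ((gaussDensity d y : ℝ) : ℂ)) x).re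

/-- The order-s Edgeworth signed measure, as a set function `A ↦ ∫_A (density)`. -/
def edgeworthSM (χ : (Fin d → ℕ) → ℂ) (n s : ℕ) (A : Set (Ed d)) : ℝ :=
  ∫ x in A, edgeworthDensity χ n s x

/-- The standard normal distribution Φ = N(0, I_d) on ℝ^d. -/
def stdGaussian (d : ℕ) : Measure (Ed d) :=
  volume.withDensity fun x => ENNReal.ofReal (gaussDensity d x)

/-- Modulus of continuity `ω_f(x;ε) = sup {|f z − f y| : z,y ∈ B(x;ε)}`. -/
def oscil (f : Ed d → ℝ) (x : Ed d) (ε : ℝ) : ℝ :=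
  sSup {r | ∃ z ∈ Metric.ball x ε, ∃ y ∈ Metric.ball x ε, r = |f z - f y|}

/-- Averaged modulus of continuity `ω̄_f(ε;μ) = ∫ ω_f(x;ε) dμ(x)`. -/
def oscilBar (f : Ed d → ℝ) (ε : ℝ) (μ : Measure (Ed d)) : ℝ :=
  ∫ x, oscil f x ε ∂μ

/-- `M_s(f) = sup_x |f(x)|/(1+‖x‖^s)`. -/
def Msup (s : ℕ) (f : Ed d → ℝ) : ℝ := ⨆ x : Ed d, |f x| / (1 + ‖x‖ ^ s)

/-- The (uncentered) second-moment matrix `E[X X']` of a measure on ℝ^d. -/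
def covMat (μ : Measure (Ed d)) : Matrix (Fin d) (Fin d) ℝ :=
  Matrix.of fun k l => ∫ x, x k * x l ∂μ

open Classical in
/-- Inverse square root of a matrix (junk value if not positive semidefinite). -/
def matInvSqrt (M : Matrix (Fin d) (Fin d) ℝ) : Matrix (Fin d) (Fin d) ℝ :=
  if h : M.PosSemidef then ((h.1.eigenvectorUnitary : Matrix (Fin d) (Fin d) ℝ) * Matrix.diagonal ((↑) ∘ NNReal.sqrt ∘ Real.toNNReal ∘ h.1.eigenvalues) * (star h.1.eigenvectorUnitary : Matrix (Fin d) (Fin d) ℝ))⁻¹ else 1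

open Classical in
/-- Square root of a matrix (junk value if not positive semidefinite). -/
def matSqrt (M : Matrix (Fin d) (Fin d) ℝ) : Matrix (Fin d) (Fin d) ℝ :=
  if h : M.PosSemidef then ((h.1.eigenvectorUnitary : Matrix (Fin d) (Fin d) ℝ) * Matrix.diagonal ((↑) ∘ NNReal.sqrt ∘ Real.toNNReal ∘ h.1.eigenvalues) * (star h.1.eigenvectorUnitary : Matrix (Fin d) (Fin d) ℝ)) else 1

/-- Matrix-vector multiplication on Euclidean space. -/
def mulVecE (M : Matrix (Fin d) (Fin d) ℝ) (x : Ed d) : Ed d :=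
  (EuclideanSpace.equiv (Fin d) ℝ).symm (M.mulVec (EuclideanSpace.equiv (Fin d) ℝ x))

/-- Marginal distribution of the i-th coordinate. -/
def marginal {n : ℕ} (P : Measure (Fin n → Ed d)) (i : Fin n) : Measure (Ed d) :=
  P.map fun ω => ω i

/-- `V_{n,P} = (1/n) Σ_i Var_P(X_{i,n})` (for mean-zero coordinates). -/
def Vmat {d : ℕ} (n : ℕ) (P : Measure (Fin n → Ed d)) : Matrix (Fin d) (Fin d) ℝ :=
  (n : ℝ)⁻¹ • ∑ i : Fin n, covMat (marginal P i)

/-- `Q_{n,P}`, the distribution of `n^{−1/2} Σ_i V_{n,P}^{−1/2} X_{i,n}`. -/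
def Qmeas {d : ℕ} (n : ℕ) (P : Measure (Fin n → Ed d)) : Measure (Ed d) :=
  P.map fun ω => (Real.sqrt n)⁻¹ • ∑ i, mulVecE (matInvSqrt (Vmat n P)) (ω i)

/-- `χ̄_{ν,P}`, the average over i of the ν-th cumulant of `V_{n,P}^{−1/2} X_{i,n}`. -/
def chiBar {d : ℕ} (n : ℕ) (P : Measure (Fin n → Ed d)) (ν : Fin d → ℕ) : ℂ :=
  (n : ℂ)⁻¹ * ∑ i : Fin n, cumulant ((marginal P i).map (mulVecE (matInvSqrt (Vmat n P)))) ν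

/-- `ρ_{n,s,P} = (1/n) Σ_i E_P ‖X_{i,n}‖^s`. -/
def rhoM {d : ℕ} (n s : ℕ) (P : Measure (Fin n → Ed d)) : ℝ :=
  (n : ℝ)⁻¹ * ∑ i : Fin n, ∫ ω, ‖ω i‖ ^ s ∂P

/-- The mean weak Cramér condition with parameter (b,c,R) for a collection of
joint distributions of (X_{i,n})_{i=1}^n. -/
def meanWeakCramer {d : ℕ} {n : ℕ} (Ps : Set (Measure (Fin n → Ed d))) (b c R : ℝ) : Prop :=
  ∀ P ∈ Ps, ∀ t : Ed d, R < ‖t‖ →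
    (n : ℝ)⁻¹ * ∑ i : Fin n, ‖charFn (marginal P i) t‖ ≤ 1 - c / ‖t‖ ^ b

/-- The weak Cramér condition with parameter (b,c,R) for a single distribution. -/
def weakCramerMeas (μ : Measure (Ed d)) (b c R : ℝ) : Prop :=
  ∀ t : Ed d, R < ‖t‖ → ‖charFn μ t‖ ≤ 1 - c / ‖t‖ ^ b

/-- The empirical (resampling) measure `(1/n) Σ_j δ_{x_j}`. -/
def empMeas {d n : ℕ} (x : Fin n → Ed d) : Measure (Ed d) :=
  ((n : ℝ≥0∞))⁻¹ • ∑ i : Fin n, Measure.dirac (x i)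

/-- Sample mean. -/
def sMean {d n : ℕ} (x : Fin n → Ed d) : Ed d := (n : ℝ)⁻¹ • ∑ i, x i

/-- Sample covariance matrix `V̂_n`. -/
def Vhat {d n : ℕ} (x : Fin n → Ed d) : Matrix (Fin d) (Fin d) ℝ :=
  (n : ℝ)⁻¹ • ∑ i : Fin n, Matrix.of fun k l => (x i k - sMean x k) * (x i l - sMean x l)

/-- The bootstrap distribution `Q_{n,ℱ_n}`: the conditional distribution, given the
sample x, of `√n V̂_n^{−1/2}(X̄* − X̄)` where `X̄*` is the mean of n i.i.d. draws from
the empirical measure of x. -/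
def bootQ {d n : ℕ} (x : Fin n → Ed d) : Measure (Ed d) :=
  (Measure.pi fun _ : Fin n => empMeas x).map
    fun y => Real.sqrt n • mulVecE (matInvSqrt (Vhat x)) (sMean y - sMean x)

/-- `χ*_ν`, the ν-th cumulant of the conditional distribution of a bootstrap draw
given the sample, i.e. of the empirical measure. -/
def bootChi {d n : ℕ} (x : Fin n → Ed d) (ν : Fin d → ℕ) : ℂ := cumulant (empMeas x) ν

/-- `Q̃_{n,ℱ_n}`, the Edgeworth signed measure built from the bootstrap cumulants. -/
def bootQtilde {d n : ℕ} (s : ℕ) (x : Fin n → Ed d) (A : Set (Ed d)) : ℝ :=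
  edgeworthSM (bootChi x) n s A

/-- Event `ℰ_{n,0}(ρ̄) = {(1/n) Σ ‖X_i‖^s ≤ ρ̄}`. -/
def Ev0 {d : ℕ} (n s : ℕ) (ρ : ℝ) : Set (Fin n → Ed d) :=
  {x | (n : ℝ)⁻¹ * ∑ i, ‖x i‖ ^ s ≤ ρ}

/-- Event `ℰ_{n,1}(c₁) = {smallest eigenvalue of V̂_n ≥ c₁}` (via the quadratic form). -/
def Ev1 {d : ℕ} (n : ℕ) (c₁ : ℝ) : Set (Fin n → Ed d) :=
  {x | ∀ v : Ed d, c₁ * ‖v‖ ^ 2 ≤ (inner ℝ v (mulVecE (Vhat x) v) : ℝ)}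

/-- Event `ℰ_{n,2}(c₂)`: all mixed absolute moments of the sample of order ≤ s are ≤ c₂. -/
def Ev2 {d : ℕ} (n s : ℕ) (c₂ : ℝ) : Set (Fin n → Ed d) :=
  {x | ∀ v : Fin d → ℕ, (∑ k, v k) ≤ s → (n : ℝ)⁻¹ * ∑ i, ∏ k, |x i k| ^ (v k) ≤ c₂}

/-- `ξ(u,v;t) = inf_{q∈ℤ} (t'(u−v) − 2πq)²`. -/
def xiFn {d : ℕ} (t u v : Ed d) : ℝ := ⨅ q : ℤ, ((inner ℝ t (u - v) : ℝ) - 2 * π * (q : ℝ)) ^ 2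

/-- Condition (★): `c_R ≤ sup_{‖t‖>R} (1/(2π²)) E_P[inf_q (t'(X₁−X₂) − 2πq)²]`
for X₁, X₂ i.i.d. with distribution P. -/
def condStar {d : ℕ} (P : Measure (Ed d)) (R cR : ℝ) : Prop :=
  cR ≤ ⨆ t : {t : Ed d // R < ‖t‖},
    (2 * π ^ 2)⁻¹ * ∫ p : Ed d × Ed d, xiFn t.1 p.1 p.2 ∂(P.prod P)

open Finset

namespace Real

lemma two_mul_sqrt_two_div_pi_mul_le_sin {x : ℝ} (hx₀ : 0 ≤ x) (hx : x ≤ π / 4) :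
    2 * √2 / π * x ≤ sin x := by
  have hπ := pi_pos
  have hchord := strictConcaveOn_sin_Icc.concaveOn.2 (⟨le_rfl, hπ.le⟩ : (0 : ℝ) ∈ Set.Icc 0 π)
    (⟨by positivity, by linarith⟩ : π / 4 ∈ Set.Icc 0 π)
    (by rw [sub_nonneg, div_mul_eq_mul_div, div_le_one hπ]; linarith : 0 ≤ 1 - 4 / π * x)
    (by positivity : 0 ≤ 4 / π * x) (by ring)
  have hx_eq : (1 - 4 / π * x) • (0 : ℝ) + (4 / π * x) • (π / 4) = x := by
    simp only [smul_eq_mul, mul_zero, zero_add]; field_simp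
  rw [hx_eq, smul_eq_mul, smul_eq_mul, sin_zero, sin_pi_div_four, mul_zero, zero_add] at hchord
  calc 2 * √2 / π * x = 4 / π * x * (√2 / 2) := by ring
    _ ≤ sin x := hchord

lemma cos_le_one_sub_four_div_pi_sq_mul_sq {x : ℝ} (hx : |x| ≤ π / 2) :
    cos x ≤ 1 - 4 / π ^ 2 * x ^ 2 := by
  wlog hx₀ : 0 ≤ x
  case inr => simpa using this (by rwa [abs_neg]) <| neg_nonneg.2 <| le_of_not_ge hx₀
  rw [abs_of_nonneg hx₀] at hx
  have hsin := two_mul_sqrt_two_div_pi_mul_le_sin (x := x / 2) (by positivity) (by linarith)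
  have := (pow_le_pow_left₀ (by positivity) hsin 2).trans_eq (sin_sq_eq_half_sub _)
  rw [mul_pow, div_pow, mul_pow, sq_sqrt zero_le_two] at this
  ring_nf at this ⊢
  linarith

lemma iInf_sub_two_pi_mul_int_sq_le (x : ℝ) :
    ⨅ q : ℤ, (x - 2 * π * q) ^ 2 ≤ π ^ 2 * (1 - |cos (x / 2)|) := by
  have hπ := pi_pos
  set q := round (x / (2 * π))
  set y := x - 2 * π * q
  have hy : |y| ≤ π := by
    have h := abs_sub_round (x / (2 * π))
    have : y = 2 * π * (x / (2 * π) - q) := by simp only [y]; field_simp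
    rw [this, abs_mul, abs_of_pos (by positivity)]
    nlinarith
  have hcos : |cos (x / 2)| = cos (y / 2) := by
    have hx : x / 2 = y / 2 + q * π := by simp only [y]; ring
    rw [hx, cos_add_int_mul_pi, abs_mul, abs_zpow, abs_neg, abs_one, one_zpow, one_mul,
      abs_of_nonneg (cos_nonneg_of_neg_pi_div_two_le_of_le (by linarith [neg_abs_le y])
        (by linarith [le_abs_self y]))]
  have hbdd : BddBelow (Set.range fun q : ℤ => (x - 2 * π * q) ^ 2) :=
    ⟨0, by rintro _ ⟨q, rfl⟩; positivity⟩
  refine (ciInf_le hbdd q).trans ?_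
  have := cos_le_one_sub_four_div_pi_sq_mul_sq (x := y / 2) (by rw [abs_div, abs_two]; linarith)
  rw [hcos]
  field_simp at this ⊢
  nlinarith

end Real

namespace Complex

lemma norm_exp_ofReal_mul_I_add_exp_ofReal_mul_I (α β : ℝ) :
    ‖exp (α * I) + exp (β * I)‖ = 2 * |Real.cos ((α - β) / 2)| := by
  have : exp (α * I) + exp (β * I) =
      exp (↑((α + β) / 2) * I) * (2 * Real.cos ((α - β) / 2) : ℝ) := by
    push_cast
    rw [two_cos, mul_add, ← exp_add, ← exp_add]
    ring_nf
  rw [this, norm_mul, norm_exp_ofReal_mul_I, one_mul, norm_real, Real.norm_eq_abs, abs_mul,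
    abs_two]

lemma norm_exp_ofReal_mul_I_add_exp_ofReal_mul_I_le (α β : ℝ) :
    ‖exp (α * I) + exp (β * I)‖ ≤ 2 - 2 / π ^ 2 * ⨅ q : ℤ, (α - β - 2 * π * q) ^ 2 := by
  rw [norm_exp_ofReal_mul_I_add_exp_ofReal_mul_I]
  have := iInf_sub_two_pi_mul_int_sq_le (α - β)
  have hπ : 0 < π ^ 2 := by positivity
  rw [div_mul_eq_mul_div, le_sub_comm, div_le_iff₀ hπ]
  linarith

end Complex

lemma Finset.sum_offDiag_fst {ι M : Type*} [DecidableEq ι] [AddCommGroup M] (s : Finset ι)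
    (f : ι → M) : ∑ p ∈ s.offDiag, f p.1 = #s • ∑ i ∈ s, f i - ∑ i ∈ s, f i := by
  have := sum_union (disjoint_diag_offDiag s) (f := fun p => f p.1)
  rw [diag_union_offDiag, sum_product, sum_diag] at this
  simp only [sum_const] at this
  rw [← smul_sum] at this
  exact eq_sub_of_add_eq' this.symm

lemma Finset.sum_offDiag_snd {ι M : Type*} [DecidableEq ι] [AddCommGroup M] (s : Finset ι)
    (f : ι → M) : ∑ p ∈ s.offDiag, f p.2 = #s • ∑ i ∈ s, f i - ∑ i ∈ s, f i := by
  have := sum_union (disjoint_diag_offDiag s) (f := fun p => f p.2)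
  rw [diag_union_offDiag, sum_product_right, sum_diag] at this
  simp only [sum_const] at this
  rw [← smul_sum] at this
  exact eq_sub_of_add_eq' this.symm

open Complex in
lemma norm_inv_card_mul_sum_exp_le {ι : Type*} [Fintype ι] [DecidableEq ι] (θ : ι → ℝ)
    (hι : 2 ≤ Fintype.card ι) :
    ‖(Fintype.card ι : ℂ)⁻¹ * ∑ i, exp (θ i * I)‖ ≤
      1 - (π ^ 2 * Fintype.card ι * ((Fintype.card ι : ℝ) - 1))⁻¹ *
        ∑ p ∈ univ.offDiag, ⨅ q : ℤ, (θ p.1 - θ p.2 - 2 * π * q) ^ 2 := by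
  set n := Fintype.card ι
  set S := ∑ i, exp (θ i * I)
  set X := ∑ p ∈ univ.offDiag, ⨅ q : ℤ, (θ p.1 - θ p.2 - 2 * π * q) ^ 2
  have hn : (2 : ℝ) ≤ n := by exact_mod_cast hι
  have hpairs : ∑ p ∈ univ.offDiag, (exp (θ p.1 * I) + exp (θ p.2 * I)) =
      ((2 * (n - 1) : ℝ) : ℂ) * S := by
    rw [sum_add_distrib, sum_offDiag_fst univ (fun i => exp (θ i * I)),
      sum_offDiag_snd univ (fun i => exp (θ i * I)), card_univ, nsmul_eq_mul]
    push_cast; ring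
  have hcard : (#(univ : Finset ι).offDiag : ℝ) = n * (n - 1) := by
    rw [offDiag_card, card_univ, Nat.cast_sub (Nat.le_mul_self n)]
    push_cast; ring
  have hS : 2 * (n - 1) * ‖S‖ ≤ 2 * (n * (n - 1)) - 2 / π ^ 2 * X :=
    calc 2 * (n - 1) * ‖S‖
        = ‖∑ p ∈ univ.offDiag, (exp (θ p.1 * I) + exp (θ p.2 * I))‖ := by
          rw [hpairs, norm_mul, norm_real, Real.norm_of_nonneg (by linarith)]
      _ ≤ ∑ p ∈ univ.offDiag, ‖exp (θ p.1 * I) + exp (θ p.2 * I)‖ := norm_sum_le _ _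
      _ ≤ ∑ p ∈ univ.offDiag, (2 - 2 / π ^ 2 * ⨅ q : ℤ, (θ p.1 - θ p.2 - 2 * π * q) ^ 2) :=
          sum_le_sum fun p _ => norm_exp_ofReal_mul_I_add_exp_ofReal_mul_I_le _ _
      _ = 2 * (n * (n - 1)) - 2 / π ^ 2 * X := by
          rw [sum_sub_distrib, sum_const, ← mul_sum, nsmul_eq_mul, hcard]; ring
  have hn1 : (0 : ℝ) < n - 1 := by linarith
  rw [norm_mul, norm_inv, Complex.norm_natCast]
  calc (n : ℝ)⁻¹ * ‖S‖ = 2 * (n - 1) * ‖S‖ / (2 * (n * (n - 1))) := by field_simp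
    _ ≤ (2 * (n * (n - 1)) - 2 / π ^ 2 * X) / (2 * (n * (n - 1))) := by gcongr
    _ = 1 - (π ^ 2 * n * (n - 1))⁻¹ * X := by field_simp

lemma xiFn_nonneg (t u v : Ed d) : 0 ≤ xiFn t u v :=
  Real.iInf_nonneg fun _ => sq_nonneg _

theorem empirical_weak_cramer_of_xi_bound_general
    (d : ℕ) (n : ℕ) (hn : 2 ≤ n) (u : Fin n → Ed d)
    (b c R : ℝ)
    (hxi : ∀ t : Ed d, R < ‖t‖ →
      c ≤ (π ^ 2 * n * ((n : ℝ) - 1))⁻¹ *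
        (∑ p ∈ Finset.univ.filter fun p : Fin n × Fin n => p.1 ≠ p.2,
          xiFn t (u p.1) (u p.2)) * ‖t‖ ^ b) :
    ∀ t : Ed d, R < ‖t‖ →
      ‖(n : ℂ)⁻¹ *
          ∑ i : Fin n, Complex.exp (((inner ℝ t (u i) : ℝ) : ℂ) * Complex.I)‖ ≤
        1 - c / ‖t‖ ^ b := by
  intro t ht
  have hn1 : (0 : ℝ) ≤ n - 1 := sub_nonneg.2 (by exact_mod_cast (by omega : 1 ≤ n))
  have hbound := div_le_of_le_mul₀ (by positivity)
    (mul_nonneg (by positivity) (sum_nonneg fun p _ => xiFn_nonneg t (u p.1) (u p.2))) (hxi t ht)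
  have hoffDiag : (univ.filter fun p : Fin n × Fin n => p.1 ≠ p.2) = univ.offDiag := by
    ext; simp
  have hxiFn (p : Fin n × Fin n) : xiFn t (u p.1) (u p.2) =
      ⨅ q : ℤ, (inner ℝ t (u p.1) - inner ℝ t (u p.2) - 2 * π * q) ^ 2 := by
    simp only [xiFn, inner_sub_right]
  rw [hoffDiag, sum_congr rfl fun p _ => hxiFn p] at hbound
  have hmean := norm_inv_card_mul_sum_exp_le (fun i => inner ℝ t (u i)) (by simpa using hn)
  simp only [Fintype.card_fin] at hmean
  linarith

/-- **Sufficient criterion for the empirical weak Cramér condition (from the proof of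
Proposition 3.1).** If `(1/(π² n(n−1))) Σ_{i≠j} ξ(u_i,u_j;t) ‖t‖^b ≥ c` for all t with
`‖t‖ > R`, then the empirical measure `(1/n)Σ δ_{u_i}` satisfies the weak Cramér
condition with parameter (b,c,R): `|(1/n)Σ e^{i t'u_i}| ≤ 1 − c/‖t‖^b` for `‖t‖ > R`. -/
theorem empirical_weak_cramer_of_xi_bound
    (d : ℕ) (hd : 1 ≤ d) (n : ℕ) (hn : 2 ≤ n) (u : Fin n → Ed d)
    (b c R : ℝ) (hb : 0 < b) (hc : 0 < c) (hR : 0 < R)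
    (hxi : ∀ t : Ed d, R < ‖t‖ →
      c ≤ (π ^ 2 * n * ((n : ℝ) - 1))⁻¹ *
        (∑ p ∈ Finset.univ.filter fun p : Fin n × Fin n => p.1 ≠ p.2,
          xiFn t (u p.1) (u p.2)) * ‖t‖ ^ b) :
    ∀ t : Ed d, R < ‖t‖ →
      ‖(n : ℂ)⁻¹ *
          ∑ i : Fin n, Complex.exp (((inner ℝ t (u i) : ℝ) : ℂ) * Complex.I)‖ ≤
        1 - c / ‖t‖ ^ b :=
  empirical_weak_cramer_of_xi_bound_general d n hn u b c R hxi
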